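/- Let s,t be odd integers with t ≡ 1 (mod 4). Then ν₂({n}_{s,t}) = 0 if 3 ∤ n, and for n = 3k, ν₂({3k}) = 1 if k is odd, and ν₂({3k}) = ν₂(k·{6}) - 1 if k is even. -/

import Mathlib

/-- Generalized Fibonacci polynomials: {0}=0, {1}=1, {n}=s{n-1}+t{n-2}. -/
def gfib {R : Type*} [CommRing R] (s t : R) : ℕ → R
  | 0 => 0
  | 1 => 1
  | n + 2 => s * gfib s t (n + 1) + t * gfib s t n

/-- Generalized Lucas polynomials: ⟨0⟩=2, ⟨1⟩=s, ⟨n⟩=s⟨n-1⟩+t⟨n-2⟩. -/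
def gluc {R : Type*} [CommRing R] (s t : R) : ℕ → R
  | 0 => 2
  | 1 => s
  | n + 2 => s * gluc s t (n + 1) + t * gluc s t n

/-!
Mod 2 the sequence `{n}` has period 3 with `{3} ≡ 0`, which gives the first claim. For the rest,
`{mk} = {m} · U_k`, where `U` is the sequence `gfib` with parameters `⟨m⟩` and `-(-t)^m`; this
comes from `{n + 2m} = ⟨m⟩{n + m} - (-t)^m {n}`. For `m = 3` the parameter `⟨3⟩` is even, so
`U_k` is odd for odd `k`, while `{3} = s² + t ≡ 2 (mod 4)`. For `m = 6` we have `⟨6⟩ ≡ 2 (mod 4)`;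
for such a `P` and odd `Q` every Lucas number `V_n(P, Q)` is `≡ 2 (mod 4)`, so the doubling formula
`U_{2n} = U_n V_n` gives `ν₂(U_j) = ν₂(j)`, that is, `ν₂({6j}) = ν₂({6}) + ν₂(j)`.
-/

section Identities

variable {R : Type*} [CommRing R] (s t : R)

theorem eq_of_recurrence {a b : ℕ → R} (ha : ∀ n, a (n + 2) = s * a (n + 1) + t * a n)
    (hb : ∀ n, b (n + 2) = s * b (n + 1) + t * b n) (h0 : a 0 = b 0) (h1 : a 1 = b 1) :
    ∀ n, a n = b n := by
  intro n
  induction n using Nat.twoStepInduction with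
  | zero => exact h0
  | one => exact h1
  | more n ih0 ih1 => rw [ha, hb, ih0, ih1]

theorem gfib_add_two (n : ℕ) : gfib s t (n + 2) = s * gfib s t (n + 1) + t * gfib s t n := rfl

theorem gluc_add_two (n : ℕ) : gluc s t (n + 2) = s * gluc s t (n + 1) + t * gluc s t n := rfl

theorem map_gfib {S : Type*} [CommRing S] (φ : R →+* S) (n : ℕ) :
    φ (gfib s t n) = gfib (φ s) (φ t) n := by
  revert n
  refine eq_of_recurrence (φ s) (φ t) (fun n => ?_) (gfib_add_two _ _) ?_ ?_ <;>
    simp [gfib]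

theorem gluc_eq_two_mul_gfib_sub (n : ℕ) : gluc s t n = 2 * gfib s t (n + 1) - s * gfib s t n := by
  revert n
  refine eq_of_recurrence s t (gluc_add_two s t) (fun n => ?_) ?_ ?_
  · simp only [gfib_add_two]; ring
  · simp [gfib, gluc]
  · simp only [gfib, gluc]; ring

theorem gfib_add (m n : ℕ) :
    gfib s t (m + n + 1) = gfib s t (m + 1) * gfib s t (n + 1) + t * gfib s t m * gfib s t n := by
  revert n
  refine eq_of_recurrence s t (fun n => ?_) (fun n => ?_) ?_ ?_
  · exact gfib_add_two s t (m + n + 1)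
  · simp only [gfib_add_two]; ring
  · simp [gfib]
  · simp only [gfib]; ring

theorem gfib_cassini (n : ℕ) :
    gfib s t (n + 1) ^ 2 - s * gfib s t (n + 1) * gfib s t n - t * gfib s t n ^ 2 = (-t) ^ n := by
  induction n with
  | zero => simp [gfib]
  | succ n ih =>
    rw [gfib_add_two, pow_succ]
    linear_combination (-t) * ih

theorem gfib_two_mul (m : ℕ) : gfib s t (2 * m) = gfib s t m * gluc s t m := by
  cases m with
  | zero => simp [gfib]
  | succ m =>
    rw [show 2 * (m + 1) = m + (m + 1) + 1 by ring, gfib_add, gluc_eq_two_mul_gfib_sub,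
      gfib_add_two]
    ring

theorem gfib_two_mul_add_one (m : ℕ) :
    gfib s t (2 * m + 1) = gluc s t m * gfib s t (m + 1) - (-t) ^ m := by
  rw [two_mul, gfib_add, gluc_eq_two_mul_gfib_sub, ← gfib_cassini s t m]
  ring

theorem gfib_add_two_mul (m n : ℕ) :
    gfib s t (n + 2 * m) = gluc s t m * gfib s t (n + m) - (-t) ^ m * gfib s t n := by
  revert n
  refine eq_of_recurrence s t (fun n => ?_) (fun n => ?_) ?_ ?_
  · rw [add_right_comm n 2, gfib_add_two, add_right_comm n 1]
  · rw [add_right_comm n 2, gfib_add_two, gfib_add_two, add_right_comm n 1]; ring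
  · simp only [zero_add, gfib_two_mul, gfib]; ring
  · simp [add_comm 1, gfib_two_mul_add_one, gfib]

theorem gfib_mul (m k : ℕ) :
    gfib s t (m * k) = gfib s t m * gfib (gluc s t m) (-(-t) ^ m) k := by
  revert k
  refine eq_of_recurrence (gluc s t m) (-(-t) ^ m) (fun k => ?_) (fun k => ?_) ?_ ?_
  · simp only [show m * (k + 2) = m * k + 2 * m by ring, gfib_add_two_mul,
      show m * k + m = m * (k + 1) by ring]
    ring
  · simp only [gfib_add_two]; ring
  · simp [gfib]
  · simp [gfib]

theorem gfib_periodic {p : ℕ} (h0 : gfib s t p = 0) (h1 : gfib s t (p + 1) = 1) :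
    Function.Periodic (gfib s t) p := by
  refine eq_of_recurrence s t (fun n => ?_) (gfib_add_two s t) ?_ ?_
  · rw [add_right_comm n 2, gfib_add_two, add_right_comm n 1]
  · simpa [gfib] using h0
  · simpa [add_comm 1, gfib] using h1

end Identities

theorem intCast_gfib {R : Type*} [CommRing R] (s t : ℤ) (n : ℕ) :
    ((gfib s t n : ℤ) : R) = gfib (s : R) (t : R) n :=
  map_gfib s t (Int.castRingHom R) n

theorem odd_gfib_of_not_three_dvd {s t : ℤ} (hs : Odd s) (ht : Odd t) {n : ℕ} (hn : ¬3 ∣ n) :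
    Odd (gfib s t n) := by
  have hper : Function.Periodic (gfib (1 : ZMod 2) 1) 3 :=
    gfib_periodic _ _ (by decide) (by decide)
  rw [← ZMod.intCast_eq_one_iff_odd, intCast_gfib, hs.intCast_zmod_two, ht.intCast_zmod_two,
    ← hper.map_mod_nat]
  rcases (by omega : n % 3 = 1 ∨ n % 3 = 2) with h | h <;> rw [h] <;> decide

theorem odd_gfib_of_odd {P Q : ℤ} (hP : Even P) (hQ : Odd Q) {n : ℕ} (hn : Odd n) :
    Odd (gfib P Q n) := by
  have hper : Function.Periodic (gfib (0 : ZMod 2) 1) 2 :=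
    gfib_periodic _ _ (by decide) (by decide)
  rw [← ZMod.intCast_eq_one_iff_odd, intCast_gfib, hP.intCast_zmod_two, hQ.intCast_zmod_two,
    ← hper.map_mod_nat, Nat.odd_iff.1 hn]
  decide

theorem gluc_emod_four {P Q : ℤ} (hP : P % 4 = 2) (hQ : Odd Q) (n : ℕ) : gluc P Q n % 4 = 2 := by
  have hQ2 := Int.odd_iff.1 hQ
  induction n using Nat.twoStepInduction with
  | zero => rfl
  | one => exact hP
  | more n ih0 ih1 =>
    have h : gluc P Q (n + 2) ≡ 2 * 2 + Q * 2 [ZMOD 4] :=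
      ((show P ≡ 2 [ZMOD 4] from hP).mul (show _ ≡ 2 [ZMOD 4] from ih1)).add
        ((show _ ≡ 2 [ZMOD 4] from ih0).mul_left Q)
    unfold Int.ModEq at h
    omega

theorem padicValInt_two_eq_zero_of_odd {x : ℤ} (hx : Odd x) : padicValInt 2 x = 0 :=
  padicValInt.eq_zero_of_not_dvd (by simpa [← even_iff_two_dvd] using hx)

theorem padicValInt_two_eq_one_of_emod_four {x : ℤ} (hx : x % 4 = 2) : padicValInt 2 x = 1 := by
  obtain ⟨y, rfl, hy⟩ : ∃ y, x = y * (2 : ℕ) ∧ Odd y := ⟨x / 2, by omega, Int.odd_iff.2 (by omega)⟩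
  rw [padicValInt_mul_eq_succ y fun h => Int.not_odd_zero (h ▸ hy),
    padicValInt_two_eq_zero_of_odd hy]

theorem padicValInt_two_gfib_eq_padicValNat {P Q : ℤ} (hP : P % 4 = 2) (hQ : Odd Q) {j : ℕ}
    (hj : j ≠ 0) :
    gfib P Q j ≠ 0 ∧ padicValInt 2 (gfib P Q j) = padicValNat 2 j := by
  induction j using Nat.strong_induction_on with
  | _ j ih => ?_
  rcases Nat.even_or_odd' j with ⟨m, rfl | rfl⟩
  · have hm : m ≠ 0 := by omega
    obtain ⟨hU, hν⟩ := ih m (by omega) hm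
    have hV := gluc_emod_four hP hQ m
    have hV0 : gluc P Q m ≠ 0 := fun h => by simp [h] at hV
    rw [gfib_two_mul]
    refine ⟨mul_ne_zero hU hV0, ?_⟩
    rw [padicValInt.mul hU hV0, hν, padicValInt_two_eq_one_of_emod_four hV,
      padicValNat.mul two_ne_zero hm, padicValNat_self, add_comm]
  · have hU : Odd (gfib P Q (2 * m + 1)) :=
      odd_gfib_of_odd (Int.even_iff.2 (by omega)) hQ (odd_two_mul_add_one m)
    refine ⟨fun h => Int.not_odd_zero (h ▸ hU), ?_⟩
    rw [padicValInt_two_eq_zero_of_odd hU, padicValNat.eq_zero_of_not_dvd (by omega)]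

theorem gfib_three_emod_four {s t : ℤ} (hs : Odd s) (ht : t % 4 = 1) : gfib s t 3 % 4 = 2 := by
  have h : gfib s t 3 = s ^ 2 + t := by simp only [gfib]; ring
  have := Int.sq_mod_four_eq_one_of_odd hs
  omega

theorem even_gluc_three {s t : ℤ} (hs : Odd s) (ht : Odd t) : Even (gluc s t 3) := by
  have h : gluc s t 3 = s ^ 3 + 3 * s * t := by simp only [gluc]; ring
  rw [h]
  exact hs.pow.add_odd ((Odd.mul (by decide) hs).mul ht)

theorem gluc_six_emod_four {s t : ℤ} (hs : Odd s) (ht : Odd t) : gluc s t 6 % 4 = 2 := by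
  obtain ⟨w, hw⟩ : Even (s ^ 2 + 3 * t) := hs.pow.add_odd (Odd.mul (by decide) ht)
  have h : gluc s t 6 = 4 * (s * w) ^ 2 + 2 * t ^ 3 := by
    have : gluc s t 6 = s ^ 2 * (s ^ 2 + 3 * t) ^ 2 + 2 * t ^ 3 := by simp only [gluc]; ring
    rw [this, hw]; ring
  have := Int.odd_iff.1 (ht.pow (n := 3))
  omega

theorem padicValInt_two_gfib_three_mul_of_odd {s t : ℤ} (hs : Odd s) (ht : t % 4 = 1) {k : ℕ}
    (hk : Odd k) : padicValInt 2 (gfib s t (3 * k)) = 1 := by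
  have ht' : Odd t := Int.odd_iff.2 (by omega)
  have hF := gfib_three_emod_four hs ht
  have hU := odd_gfib_of_odd (Q := -(-t) ^ 3) (even_gluc_three hs ht') ht'.neg.pow.neg hk
  rw [gfib_mul, padicValInt.mul (by omega) fun h => Int.not_odd_zero (h ▸ hU),
    padicValInt_two_eq_one_of_emod_four hF, padicValInt_two_eq_zero_of_odd hU]

theorem padicValInt_two_gfib_six_mul {s t : ℤ} (hs : Odd s) (ht : Odd t) (h6 : gfib s t 6 ≠ 0)
    {j : ℕ} (hj : j ≠ 0) :
    padicValInt 2 (gfib s t (6 * j)) = padicValInt 2 (gfib s t 6) + padicValNat 2 j := by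
  obtain ⟨hU, hν⟩ :=
    padicValInt_two_gfib_eq_padicValNat (Q := -(-t) ^ 6) (gluc_six_emod_four hs ht)
      ht.neg.pow.neg hj
  rw [gfib_mul, padicValInt.mul h6 hU, hν]

theorem stmt12 (s t : ℤ) (hs : Odd s) (ht : t % 4 = 1) :
    (∀ n : ℕ, ¬ (3 ∣ n) → padicValInt 2 (gfib s t n) = 0) ∧
    (∀ k : ℕ, 1 ≤ k →
      (Odd k → padicValInt 2 (gfib s t (3 * k)) = 1) ∧
      (Even k → padicValInt 2 (gfib s t (3 * k)) = padicValInt 2 ((k : ℤ) * gfib s t 6) - 1)) := by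
  have ht' : Odd t := Int.odd_iff.2 (by omega)
  refine ⟨fun n hn => padicValInt_two_eq_zero_of_odd (odd_gfib_of_not_three_dvd hs ht' hn),
    fun k hk => ⟨padicValInt_two_gfib_three_mul_of_odd hs ht, ?_⟩⟩
  rintro ⟨j, rfl⟩
  rw [show 3 * (j + j) = 6 * j by ring]
  by_cases h6 : gfib s t 6 = 0
  -- `{6}` vanishes e.g. for `s = 3, t = -3`; then both sides are `0`, the right one as `0 - 1`.
  · simp [gfib_mul s t 6, h6]
  · have hj : j ≠ 0 := by omega
    rw [padicValInt_two_gfib_six_mul hs ht' h6 hj, padicValInt.mul (by omega) h6,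
      padicValInt.of_nat, ← two_mul, padicValNat.mul two_ne_zero hj, padicValNat_self]
    omega
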